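/- For all integers n and t with 0 < t < n and every natural number l with l ≤ binom(n,t), the single-exclusion number satisfies S(n,t) ≤ l + Σ_{i=1}^{t+1} binom(n,i)·Π_{j=0}^{l−1} ( 1 − i·binom(n−i, t−i+1)/(binom(n,t)−j) )^+ , where (x)^+ = max{x, 0} and binom(a,b) denotes the binomial coefficient (equal to 0 when b < 0 or b > a). -/

import Mathlib

/-- An `(n,t)`-single-exclusion system: a collection of `t`-subsets (blocks) of an
`n`-set such that every subset `X` with `1 ≤ |X| ≤ t+1` has a block containing all
but exactly one element of `X`. -/
def IsSESystem (n t : ℕ) (S : Finset (Finset (Fin n))) : Prop :=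
  (∀ B ∈ S, B.card = t) ∧
  ∀ X : Finset (Fin n), 1 ≤ X.card → X.card ≤ t + 1 → ∃ B ∈ S, (X \ B).card = 1

/-- The `(n,t)`-single-exclusion number `S(n,t)`: the least number of blocks in an
`(n,t)`-single-exclusion system. -/
noncomputable def SENumber (n t : ℕ) : ℕ :=
  sInf {m : ℕ | ∃ S : Finset (Finset (Fin n)), IsSESystem n t S ∧ S.card = m}

/-!
Pick `l` blocks uniformly at random among the `t`-subsets. A set `X` with `|X| = i` is
single-excluded by exactly `i · C(n-i, t+1-i)` of the `C(n,t)` blocks (drop one point of `X`, add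
`t+1-i` points outside it), so it is missed by all `l` chosen blocks with probability
`C(C(n,t) - i·C(n-i,t+1-i), l) / C(C(n,t), l) ≤ ∏_{j<l} (1 - i·C(n-i,t+1-i)/(C(n,t)-j))^+`.
Some choice of the `l` blocks therefore leaves at most the expected number of sets uncovered, and
adding one block for each of them gives an SE system.
-/

open Finset

namespace Finset

theorem powersetCard_filter_forall {β : Type*} (U : Finset β) (l : ℕ) (p : β → Prop)
    [DecidablePred p] :
    {T ∈ powersetCard l U | ∀ B ∈ T, p B} = powersetCard l {B ∈ U | p B} := by
  ext T
  simp only [mem_filter, mem_powersetCard, subset_iff]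
  grind

theorem sum_filter_card_mem_eq {α M : Type*} [Fintype α] [AddCommMonoid M] (s : Finset ℕ)
    (f : ℕ → M) :
    ∑ X : Finset α with #X ∈ s, f #X = ∑ i ∈ s, (Fintype.card α).choose i • f i := by
  rw [← sum_fiberwise_of_maps_to (g := card) (t := s) fun X hX => (mem_filter.mp hX).2]
  refine sum_congr rfl fun i hi => ?_
  have hfiber : {X ∈ ({X | #X ∈ s} : Finset (Finset α)) | #X = i} = powersetCard i univ := by
    ext X
    simp only [mem_filter, mem_univ, true_and, mem_powersetCard_univ]
    grind
  rw [sum_congr rfl fun X hX => congrArg f (mem_filter.mp hX).2, sum_const, hfiber,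
    card_powersetCard, card_univ]

variable {α : Type*} [DecidableEq α] {X Z : Finset α}

theorem sdiff_erase_union_of_disjoint {x : α} (hx : x ∈ X) (hXZ : Disjoint X Z) :
    X \ (X.erase x ∪ Z) = {x} := by
  ext a
  grind [disjoint_left]

theorem erase_union_sdiff_of_disjoint (x : α) (hXZ : Disjoint X Z) :
    (X.erase x ∪ Z) \ X = Z := by
  ext a
  grind [disjoint_left]

end Finset

section Uncovered

variable {β γ : Type*} (r : β → γ → Prop) [∀ B X, Decidable (r B X)]

def uncoveredBy (T : Finset β) (𝒳 : Finset γ) : Finset γ := {X ∈ 𝒳 | ∀ B ∈ T, ¬ r B X}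

theorem sum_card_uncoveredBy_powersetCard (U : Finset β) (𝒳 : Finset γ) (l : ℕ) :
    ∑ T ∈ powersetCard l U, #(uncoveredBy r T 𝒳) =
      ∑ X ∈ 𝒳, (#{B ∈ U | ¬ r B X}).choose l := by
  refine (sum_card_bipartiteAbove_eq_sum_card_bipartiteBelow
    (r := fun T X => ∀ B ∈ T, ¬ r B X)).trans (sum_congr rfl fun X _ => ?_)
  rw [bipartiteBelow, powersetCard_filter_forall, card_powersetCard]

theorem exists_card_uncoveredBy_mul_choose_le (U : Finset β) (𝒳 : Finset γ) {l : ℕ}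
    (hl : l ≤ #U) :
    ∃ T ∈ powersetCard l U,
      #(uncoveredBy r T 𝒳) * (#U).choose l ≤ ∑ X ∈ 𝒳, (#{B ∈ U | ¬ r B X}).choose l := by
  refine exists_le_of_sum_le (powersetCard_nonempty.mpr hl) ?_
  rw [← sum_mul, sum_card_uncoveredBy_powersetCard, sum_const, card_powersetCard, smul_eq_mul,
    mul_comm]

end Uncovered

theorem cast_sub_le_mul_max (m a : ℕ) : ((m - a : ℕ) : ℝ) ≤ m * max (1 - (a : ℝ) / m) 0 := by
  rcases Nat.eq_zero_or_pos m with rfl | hm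
  · simp
  rw [mul_max_of_nonneg _ _ (Nat.cast_nonneg m), mul_sub, mul_one,
    mul_div_cancel₀ _ (by positivity), mul_zero, le_max_iff]
  rcases le_total a m with h | h
  · exact Or.inl (Nat.cast_sub h).le
  · exact Or.inr (by simp [Nat.sub_eq_zero_of_le h])

theorem choose_sub_le_choose_mul_prod {L l : ℕ} (hl : l ≤ L) (a : ℕ) :
    ((L - a).choose l : ℝ) ≤ L.choose l * ∏ j ∈ range l, max (1 - a / ((L : ℝ) - j)) 0 := by
  have hdesc (m : ℕ) : (m.choose l : ℝ) = m.descFactorial l / l.factorial := by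
    rw [Nat.descFactorial_eq_factorial_mul_choose]
    push_cast
    field_simp
  rw [hdesc, hdesc, div_mul_eq_mul_div]
  gcongr
  rw [Nat.descFactorial_eq_prod_range, Nat.descFactorial_eq_prod_range, Nat.cast_prod,
    Nat.cast_prod, ← prod_mul_distrib]
  refine prod_le_prod (fun _ _ => Nat.cast_nonneg _) fun j hj => ?_
  have hjL : j ≤ L := by linarith [mem_range.mp hj]
  rw [Nat.sub_right_comm, ← Nat.cast_sub hjL]
  exact cast_sub_le_mul_max _ _

section Blocks

variable {α : Type*} [DecidableEq α] [Fintype α]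

def coveringBlocks (t : ℕ) (X : Finset α) : Finset (Finset α) :=
  {B ∈ powersetCard t univ | #(X \ B) = 1}

theorem card_mul_choose_le_card_coveringBlocks {t : ℕ} {X : Finset α} (hX : #X ≤ t + 1) :
    #X * (Fintype.card α - #X).choose (t + 1 - #X) ≤ #(coveringBlocks t X) := by
  have hcard : #(X ×ˢ powersetCard (t + 1 - #X) Xᶜ) =
      #X * (Fintype.card α - #X).choose (t + 1 - #X) := by
    rw [card_product, card_powersetCard, card_compl]
  rw [← hcard]
  refine card_le_card_of_injOn (fun p => X.erase p.1 ∪ p.2) ?_ ?_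
  · rintro ⟨x, Z⟩ hp
    simp only [coe_product, Set.mem_prod, mem_coe, mem_powersetCard,
      subset_compl_iff_disjoint_right] at hp
    obtain ⟨hx, hZX, hZ⟩ := hp
    simp only [coveringBlocks, coe_filter, mem_powersetCard, subset_univ, true_and,
      Set.mem_ofPred_eq]
    have hXpos : 0 < #X := card_pos.mpr ⟨x, hx⟩
    rw [card_union_of_disjoint (disjoint_of_subset_left (erase_subset x X) hZX.symm),
      card_erase_of_mem hx, sdiff_erase_union_of_disjoint hx hZX.symm, card_singleton]
    omega
  · rintro ⟨x, Z⟩ hp ⟨x', Z'⟩ hp' heq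
    simp only [coe_product, Set.mem_prod, mem_coe, mem_powersetCard,
      subset_compl_iff_disjoint_right] at hp hp'
    have hx : {x} = ({x'} : Finset α) := by
      rw [← sdiff_erase_union_of_disjoint hp.1 hp.2.1.symm,
        ← sdiff_erase_union_of_disjoint hp'.1 hp'.2.1.symm]
      exact congrArg (X \ ·) heq
    have hZ : Z = Z' := by
      rw [← erase_union_sdiff_of_disjoint x hp.2.1.symm,
        ← erase_union_sdiff_of_disjoint x' hp'.2.1.symm]
      exact congrArg (· \ X) heq
    rw [singleton_inj.mp hx, hZ]

theorem coveringBlocks_nonempty {t : ℕ} {X : Finset α} (hX₁ : 1 ≤ #X) (hX₂ : #X ≤ t + 1)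
    (ht : t < Fintype.card α) : (coveringBlocks t X).Nonempty := by
  refine card_pos.mp (lt_of_lt_of_le ?_ (card_mul_choose_le_card_coveringBlocks hX₂))
  exact Nat.mul_pos hX₁ (Nat.choose_pos (by omega))

theorem cast_choose_card_not_covering_le {t l : ℕ} {X : Finset α} (hX : #X ≤ t + 1)
    (hl : l ≤ (Fintype.card α).choose t) :
    (((#{B ∈ powersetCard t univ | ¬ #(X \ B) = 1}).choose l : ℕ) : ℝ) ≤
      ((Fintype.card α).choose t).choose l * ∏ j ∈ range l,
        max (1 - (#X * (Fintype.card α - #X).choose (t + 1 - #X) : ℝ) /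
          ((Fintype.card α).choose t - j)) 0 := by
  have hsplit := card_filter_add_card_filter_not (s := powersetCard t (univ : Finset α))
    (fun B => #(X \ B) = 1)
  have hcover := card_mul_choose_le_card_coveringBlocks (α := α) hX
  rw [card_powersetCard, card_univ] at hsplit
  rw [coveringBlocks] at hcover
  calc _ ≤ ((((Fintype.card α).choose t -
          #X * (Fintype.card α - #X).choose (t + 1 - #X)).choose l : ℕ) : ℝ) :=
        Nat.cast_le.mpr (Nat.choose_le_choose l (by omega))
    _ ≤ _ := by exact_mod_cast choose_sub_le_choose_mul_prod hl _

theorem exists_card_uncoveredBy_le_sum_choose_mul_prod {t l : ℕ}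
    (hl : l ≤ (Fintype.card α).choose t) :
    ∃ T ∈ powersetCard l (powersetCard t (univ : Finset α)),
      (#(uncoveredBy (fun B X => #(X \ B) = 1) T {X | #X ∈ Icc 1 (t + 1)}) : ℝ) ≤
        ∑ i ∈ Icc 1 (t + 1), ((Fintype.card α).choose i : ℝ) * ∏ j ∈ range l,
          max (1 - (i * (Fintype.card α - i).choose (t + 1 - i) : ℝ) /
            ((Fintype.card α).choose t - j)) 0 := by
  set F : ℕ → ℝ := fun i => ∏ j ∈ range l, max (1 - (i * (Fintype.card α - i).choose (t + 1 - i)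
    : ℝ) / ((Fintype.card α).choose t - j)) 0
  have hU : #(powersetCard t (univ : Finset α)) = (Fintype.card α).choose t := by simp
  obtain ⟨T, hT, hTavg⟩ := exists_card_uncoveredBy_mul_choose_le (fun B X => #(X \ B) = 1)
    (powersetCard t univ) {X | #X ∈ Icc 1 (t + 1)} (hU ▸ hl)
  rw [hU] at hTavg
  refine ⟨T, hT, ?_⟩
  have hpos : (0 : ℝ) < ((Fintype.card α).choose t).choose l := by
    exact_mod_cast Nat.choose_pos hl
  calc _ ≤ ∑ X : Finset α with #X ∈ Icc 1 (t + 1), F #X := by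
        rw [← mul_le_mul_iff_of_pos_right hpos, sum_mul]
        calc _ = ((#(uncoveredBy (fun B X => #(X \ B) = 1) T {X | #X ∈ Icc 1 (t + 1)}) *
              ((Fintype.card α).choose t).choose l : ℕ) : ℝ) := by push_cast; rfl
          _ ≤ _ := Nat.cast_le.mpr hTavg
          _ ≤ _ := by
              push_cast
              refine sum_le_sum fun X hX => ?_
              rw [mul_comm]
              exact cast_choose_card_not_covering_le (mem_Icc.mp (mem_filter.mp hX).2).2 hl
    _ = _ := by
        rw [sum_filter_card_mem_eq]
        simp only [nsmul_eq_mul, F]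

end Blocks

theorem SENumber_le_card_add_card_uncoveredBy {n t : ℕ} (htn : t < n)
    {T : Finset (Finset (Fin n))} (hT : ∀ B ∈ T, #B = t) :
    SENumber n t ≤ #T + #(uncoveredBy (fun B X => #(X \ B) = 1) T {X | #X ∈ Icc 1 (t + 1)}) := by
  set uncovered := uncoveredBy (fun B X => #(X \ B) = 1) T {X | #X ∈ Icc 1 (t + 1)}
  have hcover : ∀ X ∈ uncovered, ∃ B, B ∈ coveringBlocks t X := fun X hX => by
    simp only [uncovered, uncoveredBy, mem_filter, mem_univ, true_and, mem_Icc] at hX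
    exact coveringBlocks_nonempty hX.1.1 hX.1.2 (by simpa using htn)
  choose! fix hfix using hcover
  have hsys : IsSESystem n t (T ∪ uncovered.image fix) := by
    refine ⟨fun B hB => ?_, fun X hX₁ hX₂ => ?_⟩
    · rcases mem_union.mp hB with hB | hB
      · exact hT B hB
      · obtain ⟨X, hX, rfl⟩ := mem_image.mp hB
        exact (mem_powersetCard.mp (mem_filter.mp (hfix X hX)).1).2
    · by_cases hX : X ∈ uncovered
      · exact ⟨fix X, mem_union_right _ (mem_image_of_mem fix hX), (mem_filter.mp (hfix X hX)).2⟩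
      · simp only [uncovered, uncoveredBy, mem_filter, mem_univ, true_and, mem_Icc, not_and,
          not_forall, not_not] at hX
        obtain ⟨B, hB, hXB⟩ := hX ⟨hX₁, hX₂⟩
        exact ⟨B, mem_union_left _ hB, hXB⟩
  calc SENumber n t ≤ #(T ∪ uncovered.image fix) := Nat.sInf_le ⟨_, hsys, rfl⟩
    _ ≤ #T + #uncovered := (card_union_le _ _).trans (Nat.add_le_add_left card_image_le _)

theorem stmt2_general (n t : ℕ) (htn : t < n) (l : ℕ) (hl : l ≤ n.choose t) :
    (SENumber n t : ℝ) ≤ (l : ℝ) +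
      ∑ i ∈ Finset.Icc 1 (t + 1),
        (n.choose i : ℝ) *
          ∏ j ∈ Finset.range l,
            max (1 - (i * ((n - i).choose (t + 1 - i)) : ℝ) / ((n.choose t : ℝ) - (j : ℝ))) 0 := by
  obtain ⟨T, hT, hTuncovered⟩ :=
    exists_card_uncoveredBy_le_sum_choose_mul_prod (α := Fin n) (t := t) (by simpa using hl)
  obtain ⟨hTblocks, hTcard⟩ := mem_powersetCard.mp hT
  calc (SENumber n t : ℝ)
      ≤ l + #(uncoveredBy (fun B X => #(X \ B) = 1) T {X | #X ∈ Icc 1 (t + 1)}) := by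
        rw [← hTcard]
        exact_mod_cast SENumber_le_card_add_card_uncoveredBy htn fun B hB =>
          (mem_powersetCard.mp (hTblocks hB)).2
    _ ≤ _ := by simpa only [Fintype.card_fin, add_le_add_iff_left] using hTuncovered

theorem stmt2 (n t : ℕ) (ht : 0 < t) (htn : t < n) (l : ℕ) (hl : l ≤ n.choose t) :
    (SENumber n t : ℝ) ≤ (l : ℝ) +
      ∑ i ∈ Finset.Icc 1 (t + 1),
        (n.choose i : ℝ) *
          ∏ j ∈ Finset.range l,
            max (1 - (i * ((n - i).choose (t + 1 - i)) : ℝ) / ((n.choose t : ℝ) - (j : ℝ))) 0 :=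
  stmt2_general n t htn l hl
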